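/- Let T(x) be the tree function, i.e., the unique formal power series over ℝ with zero constant term satisfying T = x·exp(T). Let l be a positive integer and let k be a positive real number. Then there exists a polynomial p(u) over ℝ of degree exactly l−1 such that Σ_{n≥0} (n+k)^{n−l} x^n/n! = exp(k·T(x)) · p(T(x)) as formal power series over ℝ. -/

import Mathlib

/-!
Write `E_k = exp(kT)`, `θ = X·d/dX` and `F_l = ∑ (n+k)^(n-l) xⁿ/n!`. Differentiating
`T = X·exp T` gives `(1 - T)·θT = T`, hence `θE_k = T·(θ + k)E_k`. Read coefficientwise, this
is a recursion for the coefficients of `(θ + k)E_k`, which Abel's identity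
`∑_b C(n,b) b^(b-1) (x - b)^(n-b) = n x^(n-1)` solves for all `k` at once: `(θ + k)E_k = k·F_0`.
Since `(θ + k)F_(l+1) = F_l` and `θ + k` is injective for `k > 0`, this gives `F_1 = E_k / k`,
and the induction on `l` rests on `(θ + k)(E_k·q(T)) = E_k·p(T)` whenever
`k q + u q' = (1 - u) p`, an equation that for `p` of degree `l - 1` has a solution `q` of
degree `l`.
-/

open PowerSeries

/-- Composition `φ(f)` of formal power series, which is the correct notion of
substitution of `f` into `φ` whenever `f` has zero constant term. -/
noncomputable def psComp {A : Type*} [CommRing A] (φ f : PowerSeries A) : PowerSeries A :=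
  PowerSeries.mk fun m => ∑ n ∈ Finset.range (m + 1), coeff n φ * coeff m (f ^ n)

open Finset
open scoped Polynomial

theorem sum_neg_one_pow_mul_choose_mul_pow_eq_zero {R : Type*} [CommRing R] {j n : ℕ}
    (h : j < n) :
    ∑ b ∈ range (n + 1), (-1 : R) ^ (n - b) * n.choose b * (b : R) ^ j = 0 := by
  have := congrFun (fwdDiff_iter_pow_eq_zero_of_lt (R := R) h) 0
  rw [fwdDiff_iter_eq_sum_shift] at this
  simpa [zsmul_eq_mul] using this

namespace Polynomial

variable {R : Type*} [CommRing R]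

/-- `∑_{b=1}^n C(n,b) b^(b-1) (X - b)^(n-b)`, indexed by `i = b - 1`. -/
noncomputable def abelPoly (n : ℕ) : R[X] :=
  ∑ i ∈ range n,
    C ((n.choose (i + 1) : R) * (i + 1 : R) ^ i) * (X - C (i + 1 : R)) ^ (n - (i + 1))

theorem derivative_abelPoly_succ (n : ℕ) :
    derivative (abelPoly (n + 1) : R[X]) = C (n + 1 : R) * abelPoly n := by
  rw [abelPoly, sum_range_succ, Nat.sub_self, pow_zero, mul_one, map_add, derivative_C, add_zero,
    derivative_sum, abelPoly, mul_sum]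
  refine sum_congr rfl fun i hi => ?_
  have hi : i + 1 ≤ n := mem_range.mp hi
  rw [derivative_C_mul, derivative_pow, derivative_sub, derivative_X, derivative_C, sub_zero,
    mul_one, show n + 1 - (i + 1) - 1 = n - (i + 1) by omega]
  have hchoose : ((n + 1).choose (i + 1) : R) * ((n + 1 - (i + 1) : ℕ) : R) =
      (n + 1) * n.choose (i + 1) := by
    rw [← Nat.cast_mul, ← Nat.choose_mul_succ_eq]
    push_cast
    ring
  simp only [← mul_assoc, ← C_mul]
  congr 2
  linear_combination (i + 1 : R) ^ i * hchoose

theorem eval_zero_abelPoly {n : ℕ} (hn : 2 ≤ n) : (abelPoly n : R[X]).eval 0 = 0 := by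
  have hterm : ∀ i ∈ range n,
      ((n.choose (i + 1) : R) * (i + 1 : R) ^ i) * (0 - (i + 1 : R)) ^ (n - (i + 1)) =
        (-1 : R) ^ (n - (i + 1)) * n.choose (i + 1) * ((i + 1 : ℕ) : R) ^ (n - 1) := by
    intro i hi
    have hi : i + 1 ≤ n := mem_range.mp hi
    rw [zero_sub, neg_pow, show n - 1 = i + (n - (i + 1)) by omega, pow_add]
    push_cast
    ring
  have h := sum_neg_one_pow_mul_choose_mul_pow_eq_zero (R := R) (show n - 1 < n by omega)
  rw [sum_range_succ', Nat.cast_zero, zero_pow (by omega), mul_zero, add_zero] at h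
  rw [abelPoly, eval_finsetSum]
  simp only [eval_mul, eval_C, eval_pow, eval_sub, eval_X]
  rwa [sum_congr rfl hterm]

theorem abelPoly_eq [IsAddTorsionFree R] {n : ℕ} (hn : 1 ≤ n) :
    (abelPoly n : R[X]) = C (n : R) * X ^ (n - 1) := by
  induction n, hn using Nat.le_induction with
  | base => simp [abelPoly]
  | succ n hn ih =>
    have hD : derivative (abelPoly (n + 1) - C (n + 1 : R) * X ^ n) = 0 := by
      rw [map_sub, derivative_abelPoly_succ, ih, derivative_C_mul_X_pow, C_mul]
      ring
    have hD0 : (abelPoly (n + 1) - C (n + 1 : R) * X ^ n).coeff 0 = 0 := by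
      rw [coeff_zero_eq_eval_zero, eval_sub, eval_zero_abelPoly (by omega)]
      simp [show n ≠ 0 by omega]
    have hD_eq : abelPoly (n + 1) - C (n + 1 : R) * X ^ n = 0 := by
      rw [eq_C_of_derivative_eq_zero hD, hD0, map_zero]
    rw [sub_eq_zero.mp hD_eq, Nat.add_sub_cancel]
    push_cast
    rfl

end Polynomial

theorem abel_identity {R : Type*} [CommRing R] [IsAddTorsionFree R] {n : ℕ} (hn : 1 ≤ n)
    (x : R) :
    ∑ i ∈ range n, (n.choose (i + 1) : R) * (i + 1 : R) ^ i * (x - (i + 1)) ^ (n - (i + 1)) =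
      n * x ^ (n - 1) := by
  simpa [Polynomial.abelPoly, Polynomial.eval_finsetSum] using
    congrArg (Polynomial.eval x) (Polynomial.abelPoly_eq (R := R) hn)

section Composition

variable {A : Type*} [CommRing A]

theorem constantCoeff_psComp (φ f : A⟦X⟧) :
    constantCoeff (psComp φ f) = constantCoeff φ := by
  simp only [← coeff_zero_eq_constantCoeff_apply, psComp, coeff_mk, zero_add, sum_range_one,
    pow_zero, coeff_one, if_true, mul_one]

theorem psComp_eq_subst {φ f : A⟦X⟧} (hf : constantCoeff f = 0) :
    psComp φ f = φ.subst f := by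
  ext m
  rw [psComp, coeff_mk, coeff_subst' (HasSubst.of_constantCoeff_zero' hf)]
  refine (finsum_eq_sum_of_support_subset _ fun n hn => ?_).symm
  rw [coe_range, Set.mem_Iio]
  by_contra! hmn
  have hlt : (m : ℕ∞) < (f ^ n).order :=
    (Nat.cast_lt.mpr hmn).trans_le (le_order_pow_of_constantCoeff_eq_zero n hf)
  exact hn (by simp only [coeff_of_lt_order m hlt, mul_zero])

theorem derivative_psComp_exp [Algebra ℚ A] {f : A⟦X⟧} (hf : constantCoeff f = 0) :
    d⁄dX A (psComp (exp A) f) = d⁄dX A f * psComp (exp A) f := by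
  rw [psComp_eq_subst hf, derivative_subst (HasSubst.of_constantCoeff_zero' hf), derivative_exp,
    mul_comm]

end Composition

section EulerOperator

variable {R : Type*} [CommRing R]

noncomputable def eulerOp (k : R) (F : R⟦X⟧) : R⟦X⟧ := X * d⁄dX R F + k • F

theorem coeff_eulerOp (k : R) (F : R⟦X⟧) (n : ℕ) :
    coeff n (eulerOp k F) = (n + k) * coeff n F := by
  rcases n with _ | n
  · simp [eulerOp]
  · rw [eulerOp, map_add, coeff_succ_X_mul, coeff_derivative, coeff_smul, smul_eq_mul]
    push_cast
    ring

theorem eulerOp_smul (c k : R) (F : R⟦X⟧) : eulerOp k (c • F) = c • eulerOp k F := by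
  rw [eulerOp, eulerOp, Derivation.map_smul, smul_add, mul_smul_comm, smul_comm]

theorem eulerOp_injective {k : ℝ} (hk : 0 < k) : Function.Injective (eulerOp k) := by
  intro F G h
  ext n
  have hn := congrArg (coeff n) h
  rw [coeff_eulerOp, coeff_eulerOp] at hn
  exact mul_left_cancel₀ (by positivity) hn

end EulerOperator

section TreeFunction

variable {K : Type*} [Field K] [CharZero K] {T : K⟦X⟧}

theorem X_mul_derivative_tree (hT0 : constantCoeff T = 0) (hT : T = X * psComp (exp K) T) :
    X * d⁄dX K T = T * (1 + X * d⁄dX K T) := by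
  have hE := derivative_psComp_exp hT0
  have h := congrArg (d⁄dX K) hT
  rw [Derivation.leibniz, hE, smul_eq_mul, smul_eq_mul, derivative_X] at h
  linear_combination X * h - (1 + X * d⁄dX K T) * hT

theorem X_mul_derivative_psComp_exp_smul (hT0 : constantCoeff T = 0)
    (hT : T = X * psComp (exp K) T) (k : K) :
    X * d⁄dX K (psComp (exp K) (k • T)) = T * eulerOp k (psComp (exp K) (k • T)) := by
  have hkT : constantCoeff (k • T) = 0 := by simp [hT0]
  rw [eulerOp, derivative_psComp_exp hkT, Derivation.map_smul]
  simp only [smul_eq_C_mul]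
  linear_combination C k * psComp (exp K) (C k * T) * X_mul_derivative_tree hT0 hT

open Nat in
theorem coeff_eulerOp_psComp_exp_smul (hT0 : constantCoeff T = 0)
    (hT : T = X * psComp (exp K) T) (n : ℕ) (k : K) :
    coeff n (eulerOp k (psComp (exp K) (k • T))) = k * (n + k) ^ n / n ! := by
  induction n using Nat.strong_induction_on generalizing k with
  | _ n ih =>
  rcases n with _ | m
  · simp [coeff_eulerOp, constantCoeff_psComp]
  -- The case `k = 1` of the induction hypothesis gives the coefficients of `T = X·E_1`.
  have hT_coeff : ∀ i ≤ m, coeff (i + 1) T = (i + 1) ^ i / (i + 1)! := by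
    intro i hi
    have h := ih i (by omega) 1
    rw [coeff_eulerOp, one_smul] at h
    rw [hT, coeff_succ_X_mul, Nat.factorial_succ]
    push_cast
    field_simp
    linear_combination h
  have hrec : (m + 1 : K) * coeff (m + 1) (psComp (exp K) (k • T)) =
      ∑ i ∈ range (m + 1),
        coeff (i + 1) T * coeff (m - i) (eulerOp k (psComp (exp K) (k • T))) := by
    have h := congrArg (coeff (m + 1)) (X_mul_derivative_psComp_exp_smul hT0 hT k)
    rw [coeff_succ_X_mul, coeff_derivative, coeff_mul, Nat.sum_antidiagonal_eq_sum_range_succ_mk,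
      sum_range_succ'] at h
    simpa [hT0, mul_comm] using h
  have hterm : ∀ i ∈ range (m + 1),
      coeff (i + 1) T * coeff (m - i) (eulerOp k (psComp (exp K) (k • T))) =
        k / (m + 1)! * ((m + 1).choose (i + 1) * (i + 1 : K) ^ i *
          (k + (m + 1 : ℕ) - (i + 1)) ^ (m + 1 - (i + 1))) := by
    intro i hi
    have hi : i ≤ m := Nat.lt_succ_iff.mp (mem_range.mp hi)
    rw [hT_coeff i hi, ih (m - i) (by omega) k, Nat.cast_choose K (by omega : i + 1 ≤ m + 1),
      show m + 1 - (i + 1) = m - i by omega, Nat.cast_sub hi]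
    push_cast
    field_simp [Nat.factorial_ne_zero]
    ring
  rw [sum_congr rfl hterm, ← mul_sum, abel_identity (by omega)] at hrec
  have hcoeff :
      coeff (m + 1) (psComp (exp K) (k • T)) = k * (k + (m + 1 : ℕ)) ^ m / (m + 1)! := by
    refine mul_left_cancel₀ (Nat.cast_add_one_ne_zero m) ?_
    rw [hrec, Nat.add_sub_cancel]
    push_cast
    ring
  rw [coeff_eulerOp, hcoeff]
  ring

theorem eulerOp_psComp_exp_smul_mul_aeval (hT0 : constantCoeff T = 0)
    (hT : T = X * psComp (exp K) T) {k : K} {p q : K[X]}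
    (hpq : Polynomial.C k * q + Polynomial.X * Polynomial.derivative q = (1 - Polynomial.X) * p) :
    eulerOp k (psComp (exp K) (k • T) * Polynomial.aeval T q) =
      psComp (exp K) (k • T) * Polynomial.aeval T p := by
  have hE := X_mul_derivative_psComp_exp_smul hT0 hT k
  generalize psComp (exp K) (k • T) = E at hE ⊢
  have hQ := Derivation.comp_aeval_eq (a := T) (d⁄dX K) q
  have hpq' := congrArg (Polynomial.aeval T) hpq
  simp only [map_add, map_mul, map_sub, map_one, Polynomial.aeval_C, Polynomial.aeval_X,
    algebraMap_eq] at hpq'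
  have hT1 : (1 - T : K⟦X⟧) ≠ 0 := fun h => by
    simpa [hT0] using congrArg constantCoeff h
  refine mul_left_cancel₀ hT1 ?_
  rw [eulerOp, smul_eq_C_mul] at hE ⊢
  rw [Derivation.leibniz, hQ, smul_eq_mul, smul_eq_mul, smul_eq_mul]
  linear_combination Polynomial.aeval T q * hE +
    E * Polynomial.aeval T (Polynomial.derivative q) * X_mul_derivative_tree hT0 hT + E * hpq'

end TreeFunction

namespace Polynomial

theorem exists_degree_eq_C_mul_add_X_mul_derivative_eq {k : ℝ} (hk : 0 < k) (r : ℝ[X]) :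
    ∃ q : ℝ[X], q.degree = r.degree ∧ C k * q + X * derivative q = r := by
  set q := ∑ j ∈ r.support, monomial j (r.coeff j / (k + j))
  have hq : ∀ j, q.coeff j = r.coeff j / (k + j) := by
    intro j
    simp only [q, finsetSum_coeff, coeff_monomial, sum_ite_eq', mem_support_iff]
    split_ifs with h
    · rfl
    · rw [not_not.mp h, zero_div]
  have hkj (j : ℕ) : k + j ≠ 0 := by positivity
  refine ⟨q, ?_, ?_⟩
  · have hsupport : q.support = r.support := by
      ext j
      simp [mem_support_iff, hq, hkj]
    rw [degree, degree, hsupport]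
  · ext j
    rcases j with _ | j
    · rw [coeff_add, coeff_C_mul, mul_coeff_zero, coeff_X_zero, zero_mul, add_zero, hq,
        Nat.cast_zero, add_zero]
      field_simp
    · rw [coeff_add, coeff_C_mul, coeff_X_mul, coeff_derivative, hq]
      have := hkj (j + 1)
      push_cast at this ⊢
      field_simp

end Polynomial

noncomputable def abelSeries (k : ℝ) (l : ℕ) : ℝ⟦X⟧ :=
  mk fun n => ((n : ℝ) + k) ^ ((n : ℤ) - (l : ℤ)) / (n.factorial : ℝ)

theorem eulerOp_abelSeries_succ {k : ℝ} (hk : 0 < k) (l : ℕ) :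
    eulerOp k (abelSeries k (l + 1)) = abelSeries k l := by
  ext n
  rw [coeff_eulerOp, abelSeries, abelSeries, coeff_mk, coeff_mk, mul_div_assoc',
    ← zpow_one_add₀ (by positivity), Nat.cast_succ, show 1 + ((n : ℤ) - (l + 1)) = n - l by ring]

theorem eulerOp_psComp_exp_smul {T : ℝ⟦X⟧} (hT0 : constantCoeff T = 0)
    (hT : T = X * psComp (exp ℝ) T) (k : ℝ) :
    eulerOp k (psComp (exp ℝ) (k • T)) = k • abelSeries k 0 := by
  ext n
  rw [coeff_eulerOp_psComp_exp_smul hT0 hT, coeff_smul, abelSeries, coeff_mk, smul_eq_mul]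
  simp [mul_div_assoc]

theorem abelSeries_one {T : ℝ⟦X⟧} (hT0 : constantCoeff T = 0)
    (hT : T = X * psComp (exp ℝ) T) {k : ℝ} (hk : 0 < k) :
    abelSeries k 1 = psComp (exp ℝ) (k • T) * Polynomial.aeval T (Polynomial.C k⁻¹) := by
  apply eulerOp_injective hk
  rw [Polynomial.aeval_C, algebraMap_eq, mul_comm, ← smul_eq_C_mul, eulerOp_smul,
    eulerOp_psComp_exp_smul hT0 hT, smul_smul, inv_mul_cancel₀ hk.ne', one_smul,
    eulerOp_abelSeries_succ hk]

/-- Let `T` be the tree function over `ℝ`, the unique power series with zero constant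
term satisfying `T = x·exp(T)`.  For every positive integer `l` and positive real `k`
there is a real polynomial `p` of degree exactly `l − 1` with
`∑_{n≥0} (n+k)^{n−l} xⁿ/n! = exp(k·T)·p(T)`. -/
theorem tree_function_negative_powers (T : PowerSeries ℝ)
    (hT0 : constantCoeff T = 0) (hT : T = X * psComp (PowerSeries.exp ℝ) T)
    (l : ℕ) (hl : 1 ≤ l) (k : ℝ) (hk : 0 < k) :
    ∃ p : Polynomial ℝ, p.degree = (l - 1 : ℕ) ∧
      (PowerSeries.mk fun n => ((n : ℝ) + k) ^ ((n : ℤ) - (l : ℤ)) / (n.factorial : ℝ)) =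
        psComp (PowerSeries.exp ℝ) (k • T) * Polynomial.aeval T p := by
  change ∃ p : Polynomial ℝ, p.degree = (l - 1 : ℕ) ∧
    abelSeries k l = psComp (exp ℝ) (k • T) * Polynomial.aeval T p
  induction l, hl using Nat.le_induction with
  | base => exact ⟨_, Polynomial.degree_C (inv_ne_zero hk.ne'), abelSeries_one hT0 hT hk⟩
  | succ l hl ih =>
    obtain ⟨p, hp, hF⟩ := ih
    obtain ⟨q, hq, hpq⟩ :=
      Polynomial.exists_degree_eq_C_mul_add_X_mul_derivative_eq hk ((1 - Polynomial.X) * p)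
    refine ⟨q, ?_, eulerOp_injective hk ?_⟩
    · have h1X : (1 - Polynomial.X : ℝ[X]).degree = 1 := by compute_degree!
      rw [hq, Polynomial.degree_mul, hp, h1X]
      norm_cast
      omega
    · rw [eulerOp_abelSeries_succ hk, hF, eulerOp_psComp_exp_smul_mul_aeval hT0 hT hpq]
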